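/- Let Q be a symmetric n×n matrix with smallest eigenvalue λ₁ < 0 of multiplicity m, eigenvalues λ₁=⋯=λ_m < λ_{m+1} ≤ ⋯ ≤ λ_n with orthonormal eigenvectors u₁,…,u_n, and b ∈ R^n. Then bᵀu_i = 0 for i = 1,…,m and ∑_{j=m+1}^n (u_jᵀb/(λ_j − λ₁))² = 1 hold if and only if the vector y* = −∑_{j=m+1}^n (u_jᵀb/(λ_j−λ₁)) u_j satisfies: (Q−λ₁I)y* + b = 0, ‖y*‖ = 1, and there exists a nonzero v with vᵀy* = 0 and vᵀ(Q−λ₁I)v = 0. -/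
import Mathlib


open Matrix

theorem stmt16 {n : ℕ} (hn : 0 < n) (Q : Matrix (Fin n) (Fin n) ℝ) (hQ : Qᵀ = Q)
    (b : Fin n → ℝ) (lam : Fin n → ℝ) (u : Fin n → (Fin n → ℝ))
    (horth : ∀ i j, u i ⬝ᵥ u j = if i = j then (1 : ℝ) else 0)
    (heig : ∀ i, Q.mulVec (u i) = lam i • u i)
    (m : ℕ) (hm : 0 < m) (hmn : m ≤ n)
    (hneg : lam ⟨0, hn⟩ < 0)
    (hmono : ∀ i j : Fin n, i ≤ j → lam i ≤ lam j)
    (hlow : ∀ i : Fin n, (i : ℕ) < m → lam i = lam ⟨0, hn⟩)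
    (hhigh : ∀ j : Fin n, m ≤ (j : ℕ) → lam ⟨0, hn⟩ < lam j) :
    ((∀ i : Fin n, (i : ℕ) < m → b ⬝ᵥ u i = 0) ∧
      ∑ j ∈ Finset.univ.filter (fun j : Fin n => m ≤ (j : ℕ)),
        ((u j ⬝ᵥ b) / (lam j - lam ⟨0, hn⟩)) ^ 2 = 1) ↔
    (letI ystar : Fin n → ℝ :=
      -∑ j ∈ Finset.univ.filter (fun j : Fin n => m ≤ (j : ℕ)),
        ((u j ⬝ᵥ b) / (lam j - lam ⟨0, hn⟩)) • u j
     (Q - lam ⟨0, hn⟩ • (1 : Matrix (Fin n) (Fin n) ℝ)).mulVec ystar + b = 0 ∧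
     Real.sqrt (∑ i, (ystar i) ^ 2) = 1 ∧
     ∃ v : Fin n → ℝ, v ≠ 0 ∧ v ⬝ᵥ ystar = 0 ∧
       v ⬝ᵥ (Q - lam ⟨0, hn⟩ • (1 : Matrix (Fin n) (Fin n) ℝ)).mulVec v = 0) := by
  set l0 := lam ⟨0, hn⟩ with hl0
  set S := Finset.univ.filter (fun j : Fin n => m ≤ (j : ℕ)) with hS
  set c : Fin n → ℝ := fun j => (u j ⬝ᵥ b) / (lam j - l0) with hc
  set y : Fin n → ℝ := -∑ j ∈ S, c j • u j with hy
  set A : Matrix (Fin n) (Fin n) ℝ := Q - l0 • (1 : Matrix (Fin n) (Fin n) ℝ) with hAdef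
  have hmem : ∀ j : Fin n, j ∈ S ↔ m ≤ (j : ℕ) := by
    intro j; simp [hS]
  have hpos : ∀ j ∈ S, (0:ℝ) < lam j - l0 := by
    intro j hj
    have := hhigh j ((hmem j).mp hj)
    linarith
  -- completeness of the orthonormal family
  have hcomp : ∀ x : Fin n → ℝ, ∑ j, (u j ⬝ᵥ x) • u j = x := by
    intro x
    have hU : (Matrix.of u) * (Matrix.of u)ᵀ = 1 := by
      ext i j
      simpa [Matrix.mul_apply, Matrix.one_apply, dotProduct] using horth i j
    have hU' : (Matrix.of u)ᵀ * (Matrix.of u) = 1 := mul_eq_one_comm.mp hU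
    have h2 : (Matrix.of u)ᵀ.mulVec ((Matrix.of u).mulVec x) = x := by
      rw [Matrix.mulVec_mulVec, hU', Matrix.one_mulVec]
    funext i
    have := congrFun h2 i
    simpa [Matrix.mulVec, dotProduct, Finset.sum_apply, Finset.mul_sum, mul_comm] using this
  -- expansion of dot products of linear combinations
  have hstep : ∀ (T : Finset (Fin n)) (coef : Fin n → ℝ) (x : Fin n → ℝ),
      (∑ j ∈ T, coef j • u j) ⬝ᵥ x = ∑ j ∈ T, coef j * (u j ⬝ᵥ x) := by
    intro T coef x
    simp only [dotProduct, Finset.sum_apply, Pi.smul_apply, smul_eq_mul, Finset.sum_mul]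
    rw [Finset.sum_comm]
    simp [Finset.mul_sum, mul_assoc]
  have hgen : ∀ (T : Finset (Fin n)) (coef : Fin n → ℝ) (i : Fin n),
      (∑ j ∈ T, coef j • u j) ⬝ᵥ u i = if i ∈ T then coef i else 0 := by
    intro T coef i
    rw [hstep]
    simp only [horth, mul_ite, mul_one, mul_zero]
    exact Finset.sum_ite_eq' T i coef
  have hA : ∀ j, A.mulVec (u j) = (lam j - l0) • u j := by
    intro j
    rw [hAdef, Matrix.sub_mulVec, heig j, Matrix.smul_mulVec, Matrix.one_mulVec, sub_smul]
  have hAy : A.mulVec y = -∑ j ∈ S, (u j ⬝ᵥ b) • u j := by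
    have h0 : A.mulVec y = A.mulVecLin y := rfl
    rw [h0, hy, map_neg, map_sum]
    congr 1
    apply Finset.sum_congr rfl
    intro j hj
    rw [_root_.map_smul, Matrix.mulVecLin_apply, hA j, smul_smul, hc]
    congr 1
    exact div_mul_cancel₀ _ (ne_of_gt (hpos j hj))
  have hyy : ∑ i, (y i) ^ 2 = ∑ j ∈ S, (c j) ^ 2 := by
    have h1 : ∑ i, (y i) ^ 2 = y ⬝ᵥ y := by
      simp [dotProduct, sq]
    rw [h1, hy, neg_dotProduct, dotProduct_neg, neg_neg, hstep]
    apply Finset.sum_congr rfl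
    intro j hj
    rw [dotProduct_comm, hgen S c j]
    simp [hj, sq]
  constructor
  · rintro ⟨hb0, hsum⟩
    have hbex : ∑ j ∈ S, (u j ⬝ᵥ b) • u j = b := by
      conv_rhs => rw [← hcomp b]
      apply Finset.sum_subset (Finset.subset_univ S)
      intro j _ hj
      have hjm : (j : ℕ) < m := by
        by_contra h
        exact hj ((hmem j).mpr (le_of_not_gt h))
      have : u j ⬝ᵥ b = 0 := by
        rw [dotProduct_comm]; exact hb0 j hjm
      simp [this]
    refine ⟨?_, ?_, ?_⟩
    · rw [hAy, hbex]; simp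
    · rw [hyy, Real.sqrt_eq_one]
      exact hsum
    · refine ⟨u ⟨0, hn⟩, ?_, ?_, ?_⟩
      · intro h
        have h0 := horth ⟨0, hn⟩ ⟨0, hn⟩
        rw [h] at h0
        simp [dotProduct] at h0
      · rw [dotProduct_comm, hy, neg_dotProduct, hgen S c ⟨0, hn⟩]
        have h0 : (⟨0, hn⟩ : Fin n) ∉ S := by
          rw [hmem]; show ¬ m ≤ 0; omega
        simp [h0]
      · rw [hA ⟨0, hn⟩]
        simp [← hl0]
  · rintro ⟨h1, h2, -⟩
    have hbex : b = ∑ j ∈ S, (u j ⬝ᵥ b) • u j := by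
      have hb' : b = -(A.mulVec y) := by
        linear_combination (norm := module) h1
      rw [hAy, neg_neg] at hb'
      exact hb'
    constructor
    · intro i hi
      have hiS : i ∉ S := by
        rw [hmem]; omega
      rw [dotProduct_comm]
      conv_lhs => rw [hbex]
      rw [dotProduct_comm, hgen S _ i]
      simp [hiS]
    · rw [← hyy, ← Real.sqrt_eq_one]
      exact h2
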